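/- Path consequence reduction: let 𝔠 be a class of abstract hybrid data models closed under the extracted-model construction (e.g., all models of frames satisfying pure frame conditions). For any set Λ ∪ {α} of path expressions: Λ ⊨¹_𝔠 α if and only if {@_i⟨β⟩j | β ∈ Λ} ⊨_𝔠 @_i⟨α⟩j, where i,j are nominals not occurring in Λ ∪ {α}. Here Λ ⊨¹_𝔠 α means: for every model M in 𝔠 and all points m,n, if M,m,n ⊨ β for all β ∈ Λ then M,m,n ⊨ α. -/

import Mathlib

mutual
inductive PExp (P N M E : Type) : Type
  | mod : M → PExp P N M E
  | at_ : N → PExp P N M E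
  | test : NExp P N M E → PExp P N M E
  | comp : PExp P N M E → PExp P N M E → PExp P N M E
inductive NExp (P N M E : Type) : Type
  | prop : P → NExp P N M E
  | nom : N → NExp P N M E
  | neg : NExp P N M E → NExp P N M E
  | conj : NExp P N M E → NExp P N M E → NExp P N M E
  | cmpEq : E → PExp P N M E → PExp P N M E → NExp P N M E
  | cmpNeq : E → PExp P N M E → PExp P N M E → NExp P N M E
end

/-- An abstract hybrid data model (the requirement that each `sim e` is an
equivalence relation is stated as a separate hypothesis where needed). -/
structure Model (P N M E : Type) where
  W : Type
  sim : E → W → W → Prop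
  R : M → W → W → Prop
  V : W → P → Prop
  nom : N → W

mutual
def psat {P N M E : Type} (𝔐 : Model P N M E) : PExp P N M E → 𝔐.W → 𝔐.W → Prop
  | .mod a, m, n => 𝔐.R a m n
  | .at_ i, _, n => 𝔐.nom i = n
  | .test φ, m, n => m = n ∧ nsat 𝔐 φ m
  | .comp α β, m, n => ∃ l, psat 𝔐 α m l ∧ psat 𝔐 β l n
def nsat {P N M E : Type} (𝔐 : Model P N M E) : NExp P N M E → 𝔐.W → Prop
  | .prop p, m => 𝔐.V m p
  | .nom i, m => 𝔐.nom i = m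
  | .neg φ, m => ¬ nsat 𝔐 φ m
  | .conj φ ψ, m => nsat 𝔐 φ m ∧ nsat 𝔐 ψ m
  | .cmpEq e α β, m => ∃ n l, psat 𝔐 α m n ∧ psat 𝔐 β m l ∧ 𝔐.sim e n l
  | .cmpNeq e α β, m => ∃ n l, psat 𝔐 α m n ∧ psat 𝔐 β m l ∧ ¬ 𝔐.sim e n l
end

variable {P N M E : Type}

/-- `⊤` defined from a given node expression: `¬(φ ∧ ¬φ)`. -/
def NExp.top (φ : NExp P N M E) : NExp P N M E := .neg (.conj φ (.neg φ))
/-- `ε := [⊤]`. -/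
def PExp.eps (φ : NExp P N M E) : PExp P N M E := .test (NExp.top φ)
/-- `⟨α⟩φ := ⟨α[φ] =_e α[φ]⟩`. -/
def NExp.dia (e : E) (α : PExp P N M E) (φ : NExp P N M E) : NExp P N M E :=
  .cmpEq e (α.comp (.test φ)) (α.comp (.test φ))
/-- `[α]φ := ¬⟨α⟩¬φ`. -/
def NExp.box (e : E) (α : PExp P N M E) (φ : NExp P N M E) : NExp P N M E :=
  .neg (NExp.dia e α (.neg φ))
/-- `@_i φ := ⟨@_i⟩φ`. -/
def NExp.atf (e : E) (i : N) (φ : NExp P N M E) : NExp P N M E := NExp.dia e (.at_ i) φ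
def NExp.impl (φ ψ : NExp P N M E) : NExp P N M E := .neg (.conj φ (.neg ψ))
def NExp.iffN (φ ψ : NExp P N M E) : NExp P N M E := .conj (φ.impl ψ) (ψ.impl φ)

mutual
/-- Nominals occurring in a path expression. -/
def pnoms {P N M E : Type} : PExp P N M E → List N
  | .mod _ => []
  | .at_ i => [i]
  | .test φ => nnoms φ
  | .comp α β => pnoms α ++ pnoms β
/-- Nominals occurring in a node expression. -/
def nnoms {P N M E : Type} : NExp P N M E → List N
  | .prop _ => []
  | .nom i => [i]
  | .neg φ => nnoms φ
  | .conj φ ψ => nnoms φ ++ nnoms ψ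
  | .cmpEq _ α β => pnoms α ++ pnoms β
  | .cmpNeq _ α β => pnoms α ++ pnoms β
end


/-- `@_i⟨α⟩j` as a node expression. -/
def pathNode (e₀ : E) (i : N) (α : PExp P N M E) (j : N) : NExp P N M E :=
  NExp.dia e₀ ((PExp.at_ i).comp α) (.nom j)

abbrev Model.withNom (𝔐 : Model P N M E) (nom' : N → 𝔐.W) : Model P N M E :=
  ⟨𝔐.W, 𝔐.sim, 𝔐.R, 𝔐.V, nom'⟩

mutual
theorem psat_withNom_iff (𝔐 : Model P N M E) (nom' : N → 𝔐.W) :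
    ∀ β : PExp P N M E, (∀ k ∈ pnoms β, nom' k = 𝔐.nom k) →
      ∀ m n : 𝔐.W, psat (𝔐.withNom nom') β m n ↔ psat 𝔐 β m n
  | .mod _, _, _, _ => Iff.rfl
  | .at_ k, h, _, n => by
      show nom' k = n ↔ 𝔐.nom k = n
      rw [h k (List.mem_singleton_self k)]
  | .test φ, h, m, _ => and_congr_right' (nsat_withNom_iff 𝔐 nom' φ h m)
  | .comp β γ, h, m, n => exists_congr fun l => and_congr
      (psat_withNom_iff 𝔐 nom' β (fun k hk => h k (List.mem_append_left _ hk)) m l)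
      (psat_withNom_iff 𝔐 nom' γ (fun k hk => h k (List.mem_append_right _ hk)) l n)

theorem nsat_withNom_iff (𝔐 : Model P N M E) (nom' : N → 𝔐.W) :
    ∀ φ : NExp P N M E, (∀ k ∈ nnoms φ, nom' k = 𝔐.nom k) →
      ∀ m : 𝔐.W, nsat (𝔐.withNom nom') φ m ↔ nsat 𝔐 φ m
  | .prop _, _, _ => Iff.rfl
  | .nom k, h, m => by
      show nom' k = m ↔ 𝔐.nom k = m
      rw [h k (List.mem_singleton_self k)]
  | .neg φ, h, m => not_congr (nsat_withNom_iff 𝔐 nom' φ h m)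
  | .conj φ ψ, h, m => and_congr
      (nsat_withNom_iff 𝔐 nom' φ (fun k hk => h k (List.mem_append_left _ hk)) m)
      (nsat_withNom_iff 𝔐 nom' ψ (fun k hk => h k (List.mem_append_right _ hk)) m)
  | .cmpEq _ β γ, h, m => exists₂_congr fun x y => and_congr
      (psat_withNom_iff 𝔐 nom' β (fun k hk => h k (List.mem_append_left _ hk)) m x)
      (and_congr_left' (psat_withNom_iff 𝔐 nom' γ
        (fun k hk => h k (List.mem_append_right _ hk)) m y))
  | .cmpNeq _ β γ, h, m => exists₂_congr fun x y => and_congr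
      (psat_withNom_iff 𝔐 nom' β (fun k hk => h k (List.mem_append_left _ hk)) m x)
      (and_congr_left' (psat_withNom_iff 𝔐 nom' γ
        (fun k hk => h k (List.mem_append_right _ hk)) m y))
end

theorem psat_withNom_update_update_iff [DecidableEq N] (𝔐 : Model P N M E)
    (β : PExp P N M E) {i j : N} (hi : i ∉ pnoms β) (hj : j ∉ pnoms β) (a b m n : 𝔐.W) :
    psat (𝔐.withNom (Function.update (Function.update 𝔐.nom i a) j b)) β m n ↔
      psat 𝔐 β m n :=
  psat_withNom_iff 𝔐 _ β (fun k hk => by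
    rw [Function.update_of_ne (ne_of_mem_of_not_mem hk hj),
      Function.update_of_ne (ne_of_mem_of_not_mem hk hi)]) m n

theorem nsat_pathNode_iff (𝔐 : Model P N M E) {e₀ : E} (hrefl : ∀ w, 𝔐.sim e₀ w w)
    (i : N) (α : PExp P N M E) (j : N) (m : 𝔐.W) :
    nsat 𝔐 (pathNode e₀ i α j) m ↔ psat 𝔐 α (𝔐.nom i) (𝔐.nom j) := by
  simp only [pathNode, NExp.dia, nsat, psat]
  constructor
  · rintro ⟨_, _, ⟨_, ⟨_, rfl, hα⟩, _, rfl, rfl⟩, -⟩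
    exact hα
  · intro hα
    have hpath : ∃ l, (∃ k, 𝔐.nom i = k ∧ psat 𝔐 α k l) ∧ l = 𝔐.nom j ∧ 𝔐.nom j = l :=
      ⟨𝔐.nom j, ⟨𝔐.nom i, rfl, hα⟩, rfl, rfl⟩
    exact ⟨_, _, hpath, hpath, hrefl _⟩

/-- Reduction of path consequence to node consequence: for a class `C` of
abstract hybrid data models closed under change of valuation and nominal
assignment (e.g. the class of all models of a class of frames), and fresh
nominals `i ≠ j`, we have `Λ ⊨¹_C α` iff
`{@_i⟨β⟩j | β ∈ Λ} ⊨_C @_i⟨α⟩j`. -/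
theorem path_consequence_reduction (C : Model P N M E → Prop)
    (hC_eq : ∀ 𝔐, C 𝔐 → ∀ e, Equivalence (𝔐.sim e))
    (hC_closed : ∀ 𝔐, C 𝔐 → ∀ (V' : 𝔐.W → P → Prop) (nom' : N → 𝔐.W),
      C ⟨𝔐.W, 𝔐.sim, 𝔐.R, V', nom'⟩)
    (e₀ : E) (Λ : Set (PExp P N M E)) (α : PExp P N M E) (i j : N) (hij : i ≠ j)
    (hi : i ∉ pnoms α ∧ ∀ β ∈ Λ, i ∉ pnoms β)
    (hj : j ∉ pnoms α ∧ ∀ β ∈ Λ, j ∉ pnoms β) :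
    (∀ 𝔐, C 𝔐 → ∀ m n : 𝔐.W, (∀ β ∈ Λ, psat 𝔐 β m n) → psat 𝔐 α m n) ↔
    (∀ 𝔐, C 𝔐 → ∀ m : 𝔐.W,
      (∀ β ∈ Λ, nsat 𝔐 (pathNode e₀ i β j) m) → nsat 𝔐 (pathNode e₀ i α j) m) := by
  classical
  have hrefl : ∀ 𝔐, C 𝔐 → ∀ w, 𝔐.sim e₀ w w := fun 𝔐 h𝔐 => (hC_eq 𝔐 h𝔐 e₀).refl
  constructor
  · intro H 𝔐 h𝔐 m hΛ
    rw [nsat_pathNode_iff 𝔐 (hrefl 𝔐 h𝔐)]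
    exact H 𝔐 h𝔐 _ _ fun β hβ => (nsat_pathNode_iff 𝔐 (hrefl 𝔐 h𝔐) i β j m).1 (hΛ β hβ)
  · intro H 𝔐 h𝔐 m n hΛ
    -- Being fresh, `i` and `j` can be reassigned to `m` and `n` without affecting `Λ` and `α`.
    set 𝔐' := 𝔐.withNom (Function.update (Function.update 𝔐.nom i m) j n)
    have h𝔐' : C 𝔐' := hC_closed 𝔐 h𝔐 𝔐.V _
    have hnom : 𝔐'.nom i = m ∧ 𝔐'.nom j = n := by
      simp [𝔐', Model.withNom, Function.update_of_ne hij]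
    have key := H 𝔐' h𝔐' m fun β hβ => by
      rw [nsat_pathNode_iff 𝔐' (hrefl 𝔐' h𝔐'), hnom.1, hnom.2,
        psat_withNom_update_update_iff 𝔐 β (hi.2 β hβ) (hj.2 β hβ)]
      exact hΛ β hβ
    rwa [nsat_pathNode_iff 𝔐' (hrefl 𝔐' h𝔐'), hnom.1, hnom.2,
      psat_withNom_update_update_iff 𝔐 α hi.1 hj.1] at key
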